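/- There exist a constant c > 0 and an integer k₀ such that for every k ≥ k₀, on the graph F_k (which has n = 3k + 2 vertices, all edge weights equal to 1/2, and OPT^IR ≤ 2), every persuasive binary identity-independent signaling scheme has cost at least c · n. -/
import Mathlib


open Finset

variable {V : Type*}

/-- A collaboration instance: symmetric matrix with entries in [0,1] and unit diagonal. -/
def IsCollab [Fintype V] (W : V → V → ℝ) : Prop :=
  (∀ u v, W u v = W v u) ∧ (∀ u v, 0 ≤ W u v ∧ W u v ≤ 1) ∧ (∀ v, W v v = 1)

/-- Unit-weight instance: off-diagonal entries are 0 or 1. -/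
def UnitWeight (W : V → V → ℝ) : Prop :=
  ∀ u v : V, u ≠ v → W u v = 0 ∨ W u v = 1

/-- Feasible solution: nonnegative with `W θ ≥ 1` coordinatewise. -/
def Feasible [Fintype V] (W : V → V → ℝ) (θ : V → ℝ) : Prop :=
  (∀ v, 0 ≤ θ v) ∧ ∀ v, 1 ≤ ∑ u, W v u * θ u

/-- Optimal total workload among feasible solutions. -/
noncomputable def OPT [Fintype V] (W : V → V → ℝ) : ℝ :=
  sInf {c : ℝ | ∃ θ : V → ℝ, Feasible W θ ∧ c = ∑ v, θ v}

/-- Optimal total workload among feasible solutions satisfying IR (`θ ≤ 1`). -/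
noncomputable def OPTIR [Fintype V] (W : V → V → ℝ) : ℝ :=
  sInf {c : ℝ | ∃ θ : V → ℝ, Feasible W θ ∧ (∀ v, θ v ≤ 1) ∧ c = ∑ v, θ v}

/-- An identity-independent signaling scheme: a finitely supported probability
distribution over signal functions `s : V → ℝ` whose values lie in a finite
signal space `sig ⊆ [0,1]`. -/
structure Scheme (V : Type*) [Fintype V] where
  sig : Finset ℝ
  sig_mem : ∀ θ ∈ sig, 0 ≤ θ ∧ θ ≤ 1
  supp : Finset (V → ℝ)
  val_mem : ∀ s ∈ supp, ∀ v : V, s v ∈ sig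
  p : (V → ℝ) → ℝ
  p_nonneg : ∀ s ∈ supp, 0 ≤ p s
  p_sum : ∑ s ∈ supp, p s = 1

/-- Expectation of `f` under the scheme's distribution. -/
noncomputable def Scheme.exp [Fintype V] (D : Scheme V) (f : (V → ℝ) → ℝ) : ℝ :=
  ∑ s ∈ D.supp, D.p s * f s

/-- Expected number of vertices receiving signal `θ`. -/
noncomputable def Scheme.Num [Fintype V] (D : Scheme V) (θ : ℝ) : ℝ :=
  D.exp (fun s => ∑ v, if s v = θ then (1 : ℝ) else 0)

/-- Expected total contribution entering vertices receiving signal `θ`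
(the neighborhood sum `∑_{u ∈ N(v)} W v u * s u` equals `∑_{u ≠ v} W v u * s u`). -/
noncomputable def Scheme.Contrib [Fintype V] [DecidableEq V] (D : Scheme V)
    (W : V → V → ℝ) (θ : ℝ) : ℝ :=
  D.exp (fun s => ∑ v, if s v = θ then ∑ u ∈ Finset.univ.erase v, W v u * s u else 0)

/-- The slack of signal `θ`. -/
noncomputable def Scheme.slack [Fintype V] [DecidableEq V] (D : Scheme V)
    (W : V → V → ℝ) (θ : ℝ) : ℝ :=
  D.Contrib W θ - (1 - θ) * D.Num θ

/-- Persuasiveness: zero slack at positive signals, nonnegative slack at signal 0. -/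
def Scheme.Persuasive [Fintype V] [DecidableEq V] (D : Scheme V) (W : V → V → ℝ) : Prop :=
  (∀ θ ∈ D.sig, 0 < θ → D.slack W θ = 0) ∧ ((0 : ℝ) ∈ D.sig → 0 ≤ D.slack W 0)

/-- Cost of a scheme: expected total signal value. -/
noncomputable def Scheme.cost [Fintype V] (D : Scheme V) : ℝ :=
  D.exp (fun s => ∑ v, s v)

/-- The instance `F_k`: two centers (`Sum.inl`) and `k` disjoint triangles
(`Sum.inr (i, j)` is the `j`-th vertex of the `i`-th triangle); all edges have weight `1/2`,
and each center is adjacent to every other vertex. -/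
noncomputable def Fk (k : ℕ) :
    (Fin 2 ⊕ Fin k × Fin 3) → (Fin 2 ⊕ Fin k × Fin 3) → ℝ
  | Sum.inl i, Sum.inl j => if i = j then 1 else 1 / 2
  | Sum.inl _, Sum.inr _ => 1 / 2
  | Sum.inr _, Sum.inl _ => 1 / 2
  | Sum.inr a, Sum.inr b => if a = b then 1 else if a.1 = b.1 then 1 / 2 else 0

namespace S5

abbrev Vk (k : ℕ) := Fin 2 ⊕ Fin k × Fin 3

variable {k : ℕ}

lemma sumV (f : Vk k → ℝ) :
    ∑ v, f v = f (.inl 0) + f (.inl 1) + ∑ i : Fin k, ∑ j : Fin 3, f (.inr (i,j)) := by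
  rw [Fintype.sum_sum_type, Fintype.sum_prod_type, Fin.sum_univ_two]

/-- total signal -/
noncomputable def Xs (k : ℕ) (s : Vk k → ℝ) : ℝ := ∑ v, s v
/-- center sum -/
noncomputable def cS (k : ℕ) (s : Vk k → ℝ) : ℝ := s (.inl 0) + s (.inl 1)
/-- triangle sum -/
noncomputable def tS (k : ℕ) (s : Vk k → ℝ) (i : Fin k) : ℝ := ∑ j : Fin 3, s (.inr (i,j))
/-- incoming weighted signal -/
noncomputable def inc (k : ℕ) (s : Vk k → ℝ) (v : Vk k) : ℝ :=
  ∑ u ∈ Finset.univ.erase v, Fk k v u * s u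
/-- pointwise slack of signal θ -/
noncomputable def dlt (k : ℕ) (θ : ℝ) (s : Vk k → ℝ) : ℝ :=
  ∑ v, if s v = θ then inc k s v - (1 - θ) else 0

lemma X_eq (s : Vk k → ℝ) : Xs k s = cS k s + ∑ i, tS k s i := by
  rw [Xs, sumV]; rfl

lemma tS_eq (s : Vk k → ℝ) (i : Fin k) :
    tS k s i = s (.inr (i,0)) + s (.inr (i,1)) + s (.inr (i,2)) := by
  rw [tS, Fin.sum_univ_three]

lemma Fk_diag (v : Vk k) : Fk k v v = 1 := by
  cases v with
  | inl c => simp [Fk]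
  | inr p => simp [Fk]

lemma full_sum (s : Vk k → ℝ) (v : Vk k) :
    ∑ u, Fk k v u * s u = inc k s v + s v := by
  rw [inc, ← Finset.add_sum_erase _ _ (Finset.mem_univ v), Fk_diag, one_mul, add_comm]

lemma inc_inl (s : Vk k → ℝ) (c : Fin 2) :
    inc k s (.inl c) = (Xs k s - s (.inl c)) / 2 := by
  have h : ∑ u, Fk k (Sum.inl c : Vk k) u * s u = (Xs k s + s (.inl c)) / 2 := by
    rw [X_eq, cS]
    rw [sumV (fun u => Fk k (Sum.inl c) u * s u)]
    have h2 : ∀ i : Fin k, ∑ j : Fin 3, Fk k (Sum.inl c) (.inr (i,j)) * s (.inr (i,j))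
        = tS k s i / 2 := by
      intro i
      rw [tS, Finset.sum_div]
      refine Finset.sum_congr rfl fun j _ => ?_
      show (1/2 : ℝ) * s (.inr (i,j)) = _
      ring
    rw [Finset.sum_congr rfl fun i _ => h2 i, ← Finset.sum_div]
    fin_cases c <;> simp [Fk] <;> ring
  have h3 := full_sum s (Sum.inl c : Vk k)
  rw [h] at h3
  linarith

lemma inc_inr (s : Vk k → ℝ) (i : Fin k) (j : Fin 3) :
    inc k s (.inr (i,j)) = (cS k s + tS k s i - s (.inr (i,j))) / 2 := by
  have h : ∑ u, Fk k (Sum.inr (i,j) : Vk k) u * s u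
      = (cS k s + tS k s i + s (.inr (i,j))) / 2 := by
    rw [sumV (fun u => Fk k (Sum.inr (i,j)) u * s u)]
    have hc0 : Fk k (Sum.inr (i,j) : Vk k) (.inl 0) = 1/2 := rfl
    have hc1 : Fk k (Sum.inr (i,j) : Vk k) (.inl 1) = 1/2 := rfl
    have hin : ∀ i' : Fin k, ∑ j' : Fin 3, Fk k (Sum.inr (i,j)) (.inr (i',j')) * s (.inr (i',j'))
        = if i' = i then (tS k s i + s (.inr (i,j))) / 2 else 0 := by
      intro i'
      by_cases hi : i' = i
      · subst hi
        rw [if_pos rfl, tS, Fin.sum_univ_three, Fin.sum_univ_three]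
        have hw : ∀ j' : Fin 3, Fk k (Sum.inr (i',j)) (.inr (i',j')) =
            if j = j' then 1 else 1/2 := by
          intro j'
          show (if ((i',j) : Fin k × Fin 3) = (i',j') then (1:ℝ) else if i' = i' then 1/2 else 0) = _
          by_cases hj : j = j'
          · simp [hj]
          · rw [if_neg (by simpa using hj), if_pos rfl, if_neg hj]
        rw [hw 0, hw 1, hw 2]
        fin_cases j <;> simp <;> ring
      · rw [if_neg hi]
        refine Finset.sum_eq_zero fun j' _ => ?_
        have : Fk k (Sum.inr (i,j)) (.inr (i',j')) = 0 := by
          show (if ((i,j) : Fin k × Fin 3) = (i',j') then (1:ℝ) else if i = i' then 1/2 else 0) = 0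
          rw [if_neg (by simp [Ne.symm hi]), if_neg (fun h => hi (Eq.symm h))]
        rw [this, zero_mul]
    rw [Finset.sum_congr rfl fun i' _ => hin i', Finset.sum_ite_eq' Finset.univ i
        (fun _ => (tS k s i + s (.inr (i,j))) / 2), if_pos (Finset.mem_univ i), hc0, hc1, cS]
    ring
  have h3 := full_sum s (Sum.inr (i,j) : Vk k)
  rw [h] at h3
  linarith

lemma cost_eq (D : Scheme (Vk k)) : D.cost = ∑ s ∈ D.supp, D.p s * Xs k s := rfl

lemma slack_eq (D : Scheme (Vk k)) (θ : ℝ) :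
    D.slack (Fk k) θ = ∑ s ∈ D.supp, D.p s * dlt k θ s := by
  rw [Scheme.slack, Scheme.Contrib, Scheme.Num, Scheme.exp, Scheme.exp, Finset.mul_sum,
      ← Finset.sum_sub_distrib]
  refine Finset.sum_congr rfl fun s _ => ?_
  have hd : dlt k θ s = (∑ v, if s v = θ then ∑ u ∈ Finset.univ.erase v, Fk k v u * s u else 0)
      - (1 - θ) * ∑ v, (if s v = θ then (1:ℝ) else 0) := by
    rw [dlt, Finset.mul_sum, ← Finset.sum_sub_distrib]
    refine Finset.sum_congr rfl fun v _ => ?_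
    simp only [inc]
    split <;> simp
  rw [hd]; ring

lemma cert (D : Scheme (Vk k)) (a b lam mu al c' : ℝ)
    (ha : 0 ≤ ∑ s ∈ D.supp, D.p s * dlt k a s) (hb : ∑ s ∈ D.supp, D.p s * dlt k b s = 0)
    (hlam : 0 ≤ lam)
    (key : ∀ s ∈ D.supp, c' * (3*(k:ℝ)+2) ≤ al * Xs k s - lam * dlt k a s - mu * dlt k b s) :
    c' * (3*(k:ℝ)+2) ≤ al * D.cost := by
  have h1 : c' * (3*(k:ℝ)+2) = ∑ s ∈ D.supp, D.p s * (c' * (3*(k:ℝ)+2)) := by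
    rw [← Finset.sum_mul, D.p_sum, one_mul]
  have h2 : ∑ s ∈ D.supp, D.p s * (c' * (3*(k:ℝ)+2))
      ≤ ∑ s ∈ D.supp, D.p s * (al * Xs k s - lam * dlt k a s - mu * dlt k b s) :=
    Finset.sum_le_sum fun s hs =>
      mul_le_mul_of_nonneg_left (key s hs) (D.p_nonneg s hs)
  have h3 : ∑ s ∈ D.supp, D.p s * (al * Xs k s - lam * dlt k a s - mu * dlt k b s)
      = al * D.cost - lam * (∑ s ∈ D.supp, D.p s * dlt k a s)
        - mu * (∑ s ∈ D.supp, D.p s * dlt k b s) := by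
    rw [cost_eq, Finset.mul_sum, Finset.mul_sum, Finset.mul_sum, ← Finset.sum_sub_distrib,
      ← Finset.sum_sub_distrib]
    exact Finset.sum_congr rfl fun s _ => by ring
  rw [hb, mul_zero] at h3
  have h4 := mul_nonneg hlam ha
  linarith

lemma master (s : Vk k → ℝ) (a b lam mu al : ℝ) (hab : a ≠ b) (hs : ∀ v, s v = a ∨ s v = b) :
    al * Xs k s - lam * dlt k a s - mu * dlt k b s
    = ((al * s (.inl 0) - (if s (.inl 0) = a then lam else mu) *
          ((cS k s - s (.inl 0))/2 - (1 - s (.inl 0))))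
      + (al * s (.inl 1) - (if s (.inl 1) = a then lam else mu) *
          ((cS k s - s (.inl 1))/2 - (1 - s (.inl 1)))))
    + ∑ i, ((∑ j : Fin 3, (al * s (.inr (i,j)) - (if s (.inr (i,j)) = a then lam else mu) *
          ((cS k s + tS k s i - s (.inr (i,j)))/2 - (1 - s (.inr (i,j))))))
        - ((if s (.inl 0) = a then lam else mu) + (if s (.inl 1) = a then lam else mu))/2
          * tS k s i) := by
  have key : ∀ v, (al * s v - lam * (if s v = a then inc k s v - (1-a) else 0)
      - mu * (if s v = b then inc k s v - (1-b) else 0))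
      = al * s v - (if s v = a then lam else mu) * (inc k s v - (1 - s v)) := by
    intro v
    rcases hs v with h | h <;> rw [h]
    · simp [hab]
    · simp [Ne.symm hab]
  have h1 : al * Xs k s - lam * dlt k a s - mu * dlt k b s
      = ∑ v, (al * s v - (if s v = a then lam else mu) * (inc k s v - (1 - s v))) := by
    rw [Xs, dlt, dlt, Finset.mul_sum, Finset.mul_sum, Finset.mul_sum, ← Finset.sum_sub_distrib,
      ← Finset.sum_sub_distrib]
    exact Finset.sum_congr rfl fun v _ => key v
  rw [h1, sumV (fun v => al * s v - (if s v = a then lam else mu) * (inc k s v - (1 - s v))),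
    inc_inl, inc_inl, X_eq]
  have h2 : ∀ i : Fin k, ∑ j : Fin 3,
      (al * s (.inr (i,j)) - (if s (.inr (i,j)) = a then lam else mu) *
        (inc k s (.inr (i,j)) - (1 - s (.inr (i,j)))))
      = ∑ j : Fin 3, (al * s (.inr (i,j)) - (if s (.inr (i,j)) = a then lam else mu) *
          ((cS k s + tS k s i - s (.inr (i,j)))/2 - (1 - s (.inr (i,j))))) := by
    intro i
    exact Finset.sum_congr rfl fun j _ => by rw [inc_inr]
  rw [Finset.sum_congr rfl fun i _ => h2 i, Finset.sum_sub_distrib, ← Finset.mul_sum]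
  ring

/-- Per-triangle bound, region R3a. -/
lemma triR3a (a b x y z mx my mz cs kap : ℝ)
    (ha : 0 ≤ a) (had : 2*a ≤ 1 - b) (hb1 : 3/4 ≤ b) (hb2 : b ≤ 1)
    (hx : x = a ∧ mx = b ∨ x = b ∧ mx = -2*b)
    (hy : y = a ∧ my = b ∨ y = b ∧ my = -2*b)
    (hz : z = a ∧ mz = b ∨ z = b ∧ mz = -2*b)
    (hc : cs = 2*a ∧ kap = b ∨ cs = a + b ∧ kap = (b + -2*b)/2 ∨ cs = 2*b ∧ kap = -2*b) :
    3/2*(1-b) ≤ (3*(1-b) * x - mx * ((cs + (x+y+z) - x)/2 - (1-x)))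
      + (3*(1-b) * y - my * ((cs + (x+y+z) - y)/2 - (1-y)))
      + (3*(1-b) * z - mz * ((cs + (x+y+z) - z)/2 - (1-z)))
      - kap * (x+y+z) := by
  have h1 : (0:ℝ) ≤ 1 - b - 2*a := by linarith
  have h2 : (0:ℝ) ≤ 1 - b := by linarith
  have h3 : (0:ℝ) ≤ 4*b - 3 := by linarith
  have hp12 : (0:ℝ) ≤ (1 - b - 2*a) * (1 - b) := mul_nonneg h1 h2
  have hp13 : (0:ℝ) ≤ (1 - b - 2*a) * (4*b - 3) := mul_nonneg h1 h3
  have hp22 : (0:ℝ) ≤ (1 - b) * (1 - b) := mul_nonneg h2 h2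
  have hp23 : (0:ℝ) ≤ (1 - b) * (4*b - 3) := mul_nonneg h2 h3
  have hp24 : (0:ℝ) ≤ (1 - b) * a := mul_nonneg h2 ha
  have hp34 : (0:ℝ) ≤ (4*b - 3) * a := mul_nonneg h3 ha
  obtain ⟨rfl, rfl⟩ | ⟨rfl, rfl⟩ := hx <;>
    obtain ⟨rfl, rfl⟩ | ⟨rfl, rfl⟩ := hy <;>
      obtain ⟨rfl, rfl⟩ | ⟨rfl, rfl⟩ := hz <;>
        (obtain ⟨rfl, rfl⟩ | ⟨rfl, rfl⟩ | ⟨rfl, rfl⟩ := hc) <;>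
          linarith

/-- Center-block bound, region R3a. -/
lemma cenR3a (a b x0 x1 m0 m1 cs : ℝ)
    (ha : 0 ≤ a) (had : 2*a ≤ 1 - b) (hb1 : 3/4 ≤ b) (hb2 : b ≤ 1)
    (hcs : cs = x0 + x1)
    (h0 : x0 = a ∧ m0 = b ∨ x0 = b ∧ m0 = -2*b)
    (h1 : x1 = a ∧ m1 = b ∨ x1 = b ∧ m1 = -2*b) :
    2*(1-b) ≤ (3*(1-b) * x0 - m0 * ((cs - x0)/2 - (1-x0)))
      + (3*(1-b) * x1 - m1 * ((cs - x1)/2 - (1-x1))) := by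
  subst hcs
  have hg1 : (0:ℝ) ≤ 1 - b - 2*a := by linarith
  have hg2 : (0:ℝ) ≤ 1 - b := by linarith
  have hg3 : (0:ℝ) ≤ 4*b - 3 := by linarith
  have hp13 : (0:ℝ) ≤ (1 - b - 2*a) * (4*b - 3) := mul_nonneg hg1 hg3
  have hp24 : (0:ℝ) ≤ (1 - b) * a := mul_nonneg hg2 ha
  obtain ⟨rfl, rfl⟩ | ⟨rfl, rfl⟩ := h0 <;> obtain ⟨rfl, rfl⟩ | ⟨rfl, rfl⟩ := h1 <;>
    linarith

lemma sum_tri_lb {k : ℕ} (g : ℝ) (G : Fin k → ℝ) (h : ∀ i, g ≤ G i) :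
    (k:ℝ) * g ≤ ∑ i, G i := by
  calc (k:ℝ) * g = ∑ _i : Fin k, g := by
        rw [Finset.sum_const, Finset.card_univ, Fintype.card_fin, nsmul_eq_mul]
    _ ≤ ∑ i, G i := Finset.sum_le_sum fun i _ => h i

/-- Pointwise certificate, region R3a. -/
lemma ptR3a {k : ℕ} (s : Vk k → ℝ) (a b : ℝ) (ha : 0 ≤ a) (had : 2*a ≤ 1 - b)
    (hb1 : 3/4 ≤ b) (hb2 : b ≤ 1) (hab : a ≠ b) (hs : ∀ v, s v = a ∨ s v = b) :
    (1-b)/2 * (3*(k:ℝ)+2) ≤ 3*(1-b) * Xs k s - b * dlt k a s - (-2*b) * dlt k b s := by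
  rw [master s a b b (-2*b) (3*(1-b)) hab hs]
  have hv : ∀ v : Vk k, s v = a ∧ (if s v = a then b else -2*b) = b
      ∨ s v = b ∧ (if s v = a then b else -2*b) = -2*b := by
    intro v
    rcases hs v with h | h
    · exact Or.inl ⟨h, by rw [if_pos h]⟩
    · exact Or.inr ⟨h, by rw [if_neg (by rw [h]; exact Ne.symm hab)]⟩
  have hcen := cenR3a a b (s (.inl 0)) (s (.inl 1))
    (if s (.inl 0) = a then b else -2*b) (if s (.inl 1) = a then b else -2*b)
    (cS k s) ha had hb1 hb2 rfl (hv _) (hv _)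
  have hc : cS k s = 2*a ∧ ((if s (.inl 0) = a then b else -2*b)
        + (if s (.inl 1) = a then b else -2*b))/2 = b
      ∨ cS k s = a + b ∧ ((if s (.inl 0) = a then b else -2*b)
        + (if s (.inl 1) = a then b else -2*b))/2 = (b + -2*b)/2
      ∨ cS k s = 2*b ∧ ((if s (.inl 0) = a then b else -2*b)
        + (if s (.inl 1) = a then b else -2*b))/2 = -2*b := by
    rcases hv (.inl 0) with ⟨h0a, h0m⟩ | ⟨h0a, h0m⟩ <;>
      rcases hv (.inl 1) with ⟨h1a, h1m⟩ | ⟨h1a, h1m⟩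
    · exact Or.inl ⟨by rw [cS, h0a, h1a]; ring, by rw [h0m, h1m]; ring⟩
    · exact Or.inr (Or.inl ⟨by rw [cS, h0a, h1a], by rw [h0m, h1m]⟩)
    · exact Or.inr (Or.inl ⟨by rw [cS, h0a, h1a]; ring, by rw [h0m, h1m]; ring⟩)
    · exact Or.inr (Or.inr ⟨by rw [cS, h0a, h1a]; ring, by rw [h0m, h1m]; ring⟩)
  have htri : ∀ i : Fin k, 3/2*(1-b) ≤
      (∑ j : Fin 3, (3*(1-b) * s (.inr (i,j)) - (if s (.inr (i,j)) = a then b else -2*b) *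
          ((cS k s + tS k s i - s (.inr (i,j)))/2 - (1 - s (.inr (i,j))))))
        - ((if s (.inl 0) = a then b else -2*b) + (if s (.inl 1) = a then b else -2*b))/2
          * tS k s i := by
    intro i
    have h := triR3a a b (s (.inr (i,0))) (s (.inr (i,1))) (s (.inr (i,2)))
      (if s (.inr (i,0)) = a then b else -2*b) (if s (.inr (i,1)) = a then b else -2*b)
      (if s (.inr (i,2)) = a then b else -2*b) (cS k s)
      (((if s (.inl 0) = a then b else -2*b) + (if s (.inl 1) = a then b else -2*b))/2)
      ha had hb1 hb2 (hv _) (hv _) (hv _) hc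
    rw [Fin.sum_univ_three, tS_eq]
    linarith [h]
  have hsum := sum_tri_lb (3/2*(1-b)) _ htri
  have h2 : (0:ℝ) ≤ 1 - b := by linarith
  linarith [hcen, hsum]

/-- Pointwise certificate, region R2 (`b ≤ 3/4`). -/
lemma ptR2 {k : ℕ} (s : Vk k → ℝ) (a b : ℝ) (ha : 0 ≤ a) (hab : a ≤ b) (hb : b ≤ 3/4)
    (habne : a ≠ b) (hs : ∀ v, s v = a ∨ s v = b) :
    1/4 * (3*(k:ℝ)+2) ≤ 3 * Xs k s - 1 * dlt k a s - 1 * dlt k b s := by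
  rw [master s a b 1 1 3 habne hs]
  simp only [ite_self]
  have hv : ∀ v : Vk k, 0 ≤ s v ∧ s v ≤ 3/4 := by
    intro v
    rcases hs v with h | h <;> rw [h] <;> constructor <;> linarith
  have hcs : cS k s = s (.inl 0) + s (.inl 1) := rfl
  obtain ⟨hc1, hc2⟩ := hv (.inl 0)
  obtain ⟨hc3, hc4⟩ := hv (.inl 1)
  have hcen : (2:ℝ) ≤ (3 * s (.inl 0) - 1 * ((cS k s - s (.inl 0))/2 - (1 - s (.inl 0))))
      + (3 * s (.inl 1) - 1 * ((cS k s - s (.inl 1))/2 - (1 - s (.inl 1)))) := by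
    rw [hcs]; ring_nf; linarith
  have htri : ∀ i : Fin k, (3/4:ℝ) ≤
      (∑ j : Fin 3, (3 * s (.inr (i,j)) - 1 *
          ((cS k s + tS k s i - s (.inr (i,j)))/2 - (1 - s (.inr (i,j))))))
        - (1 + 1)/2 * tS k s i := by
    intro i
    rw [Fin.sum_univ_three, tS_eq, hcs]
    ring_nf
    linarith
  have hsum := sum_tri_lb (3/4 : ℝ) _ htri
  linarith [hcen, hsum]

/-- Per-triangle bound, region R3c (`a = 0`, `b = 1`), at most one high center. -/
lemma triR3cLow (M x y z mx my mz cs kap : ℝ) (hM : 7 ≤ M)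
    (hx : x = 0 ∧ mx = 1 ∨ x = 1 ∧ mx = -M)
    (hy : y = 0 ∧ my = 1 ∨ y = 1 ∧ my = -M)
    (hz : z = 0 ∧ mz = 1 ∨ z = 1 ∧ mz = -M)
    (hc : cs = 0 ∧ kap = 1 ∨ cs = 0 + 1 ∧ kap = (1 + -M)/2) :
    3/2 ≤ (3/2 * x - mx * ((cs + (x+y+z) - x)/2 - (1-x)))
      + (3/2 * y - my * ((cs + (x+y+z) - y)/2 - (1-y)))
      + (3/2 * z - mz * ((cs + (x+y+z) - z)/2 - (1-z)))
      - kap * (x+y+z) := by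
  obtain ⟨rfl, rfl⟩ | ⟨rfl, rfl⟩ := hx <;>
    obtain ⟨rfl, rfl⟩ | ⟨rfl, rfl⟩ := hy <;>
      obtain ⟨rfl, rfl⟩ | ⟨rfl, rfl⟩ := hz <;>
        (obtain ⟨rfl, rfl⟩ | ⟨rfl, rfl⟩ := hc) <;> linarith

/-- Per-triangle bound, region R3c, both centers high. -/
lemma triR3cHi (M x y z mx my mz kap : ℝ) (hM : 7 ≤ M) (hkap : kap = -M)
    (hx : x = 0 ∧ mx = 1 ∨ x = 1 ∧ mx = -M)
    (hy : y = 0 ∧ my = 1 ∨ y = 1 ∧ my = -M)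
    (hz : z = 0 ∧ mz = 1 ∨ z = 1 ∧ mz = -M) :
    0 ≤ (3/2 * x - mx * ((1 + 1 + (x+y+z) - x)/2 - (1-x)))
      + (3/2 * y - my * ((1 + 1 + (x+y+z) - y)/2 - (1-y)))
      + (3/2 * z - mz * ((1 + 1 + (x+y+z) - z)/2 - (1-z)))
      - kap * (x+y+z) := by
  subst hkap
  obtain ⟨rfl, rfl⟩ | ⟨rfl, rfl⟩ := hx <;>
    obtain ⟨rfl, rfl⟩ | ⟨rfl, rfl⟩ := hy <;>
      obtain ⟨rfl, rfl⟩ | ⟨rfl, rfl⟩ := hz <;> linarith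

/-- Pointwise certificate, region R3c: `a = 0`, `b = 1`. -/
lemma ptR3c {k : ℕ} (hk : 1 ≤ k) (s : Vk k → ℝ) (hs : ∀ v, s v = 0 ∨ s v = 1) :
    1/2 * (3*(k:ℝ)+2) ≤ 3/2 * Xs k s - 1 * dlt k 0 s
      - (-(3*(k:ℝ)+4)) * dlt k 1 s := by
  have hk' : (1:ℝ) ≤ (k:ℝ) := by exact_mod_cast hk
  have hM : 7 ≤ 3*(k:ℝ)+4 := by linarith
  rw [master s 0 1 1 (-(3*(k:ℝ)+4)) (3/2) (by norm_num) hs]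
  have hv : ∀ v : Vk k, s v = 0 ∧ (if s v = 0 then (1:ℝ) else -(3*(k:ℝ)+4)) = 1
      ∨ s v = 1 ∧ (if s v = 0 then (1:ℝ) else -(3*(k:ℝ)+4)) = -(3*(k:ℝ)+4) := by
    intro v
    rcases hs v with h | h
    · exact Or.inl ⟨h, by rw [if_pos h]⟩
    · exact Or.inr ⟨h, by rw [if_neg (by rw [h]; norm_num)]⟩
  rcases hv (.inl 0) with ⟨h0a, h0m⟩ | ⟨h0a, h0m⟩ <;>
    rcases hv (.inl 1) with ⟨h1a, h1m⟩ | ⟨h1a, h1m⟩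
  · -- both centers 0
    have hcs : cS k s = 0 := by rw [cS, h0a, h1a]; ring
    have htri : ∀ i : Fin k, (3/2:ℝ) ≤
        (∑ j : Fin 3, (3/2 * s (.inr (i,j)) - (if s (.inr (i,j)) = 0 then (1:ℝ)
            else -(3*(k:ℝ)+4)) *
            ((cS k s + tS k s i - s (.inr (i,j)))/2 - (1 - s (.inr (i,j))))))
          - ((if s (.inl 0) = 0 then (1:ℝ) else -(3*(k:ℝ)+4))
            + (if s (.inl 1) = 0 then (1:ℝ) else -(3*(k:ℝ)+4)))/2 * tS k s i := by
      intro i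
      have h := triR3cLow (3*(k:ℝ)+4) (s (.inr (i,0))) (s (.inr (i,1))) (s (.inr (i,2)))
        _ _ _ (cS k s)
        (((if s (.inl 0) = 0 then (1:ℝ) else -(3*(k:ℝ)+4))
          + (if s (.inl 1) = 0 then (1:ℝ) else -(3*(k:ℝ)+4)))/2)
        hM (hv _) (hv _) (hv _) (Or.inl ⟨hcs, by rw [h0m, h1m]; norm_num⟩)
      rw [Fin.sum_univ_three, tS_eq]
      linarith [h]
    have hsum := sum_tri_lb (3/2 : ℝ) _ htri
    rw [h0m, h1m, hcs] at hsum ⊢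
    rw [h0a, h1a]
    linarith [hsum, Nat.cast_nonneg (α := ℝ) k]
  · -- center 0 low, center 1 high
    have hcs : cS k s = 0 + 1 := by rw [cS, h0a, h1a]
    have htri : ∀ i : Fin k, (3/2:ℝ) ≤
        (∑ j : Fin 3, (3/2 * s (.inr (i,j)) - (if s (.inr (i,j)) = 0 then (1:ℝ)
            else -(3*(k:ℝ)+4)) *
            ((cS k s + tS k s i - s (.inr (i,j)))/2 - (1 - s (.inr (i,j))))))
          - ((if s (.inl 0) = 0 then (1:ℝ) else -(3*(k:ℝ)+4))
            + (if s (.inl 1) = 0 then (1:ℝ) else -(3*(k:ℝ)+4)))/2 * tS k s i := by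
      intro i
      have h := triR3cLow (3*(k:ℝ)+4) (s (.inr (i,0))) (s (.inr (i,1))) (s (.inr (i,2)))
        _ _ _ (cS k s)
        (((if s (.inl 0) = 0 then (1:ℝ) else -(3*(k:ℝ)+4))
          + (if s (.inl 1) = 0 then (1:ℝ) else -(3*(k:ℝ)+4)))/2)
        hM (hv _) (hv _) (hv _) (Or.inr ⟨hcs, by rw [h0m, h1m]⟩)
      rw [Fin.sum_univ_three, tS_eq]
      linarith [h]
    have hsum := sum_tri_lb (3/2 : ℝ) _ htri
    rw [h0m, h1m, hcs] at hsum ⊢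
    rw [h0a, h1a]
    linarith [hsum, Nat.cast_nonneg (α := ℝ) k]
  · -- center 0 high, center 1 low
    have hcs : cS k s = 0 + 1 := by rw [cS, h0a, h1a]; ring
    have htri : ∀ i : Fin k, (3/2:ℝ) ≤
        (∑ j : Fin 3, (3/2 * s (.inr (i,j)) - (if s (.inr (i,j)) = 0 then (1:ℝ)
            else -(3*(k:ℝ)+4)) *
            ((cS k s + tS k s i - s (.inr (i,j)))/2 - (1 - s (.inr (i,j))))))
          - ((if s (.inl 0) = 0 then (1:ℝ) else -(3*(k:ℝ)+4))
            + (if s (.inl 1) = 0 then (1:ℝ) else -(3*(k:ℝ)+4)))/2 * tS k s i := by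
      intro i
      have h := triR3cLow (3*(k:ℝ)+4) (s (.inr (i,0))) (s (.inr (i,1))) (s (.inr (i,2)))
        _ _ _ (cS k s)
        (((if s (.inl 0) = 0 then (1:ℝ) else -(3*(k:ℝ)+4))
          + (if s (.inl 1) = 0 then (1:ℝ) else -(3*(k:ℝ)+4)))/2)
        hM (hv _) (hv _) (hv _) (Or.inr ⟨hcs, by rw [h0m, h1m]; ring⟩)
      rw [Fin.sum_univ_three, tS_eq]
      linarith [h]
    have hsum := sum_tri_lb (3/2 : ℝ) _ htri
    rw [h0m, h1m, hcs] at hsum ⊢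
    rw [h0a, h1a]
    linarith [hsum, Nat.cast_nonneg (α := ℝ) k]
  · -- both centers high
    have hcs : cS k s = 1 + 1 := by rw [cS, h0a, h1a]
    have htri : ∀ i : Fin k, (0:ℝ) ≤
        (∑ j : Fin 3, (3/2 * s (.inr (i,j)) - (if s (.inr (i,j)) = 0 then (1:ℝ)
            else -(3*(k:ℝ)+4)) *
            ((cS k s + tS k s i - s (.inr (i,j)))/2 - (1 - s (.inr (i,j))))))
          - ((if s (.inl 0) = 0 then (1:ℝ) else -(3*(k:ℝ)+4))
            + (if s (.inl 1) = 0 then (1:ℝ) else -(3*(k:ℝ)+4)))/2 * tS k s i := by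
      intro i
      have h := triR3cHi (3*(k:ℝ)+4) (s (.inr (i,0))) (s (.inr (i,1))) (s (.inr (i,2)))
        _ _ _
        (((if s (.inl 0) = 0 then (1:ℝ) else -(3*(k:ℝ)+4))
          + (if s (.inl 1) = 0 then (1:ℝ) else -(3*(k:ℝ)+4)))/2)
        hM (by rw [h0m, h1m]; ring) (hv _) (hv _) (hv _)
      rw [Fin.sum_univ_three, tS_eq, hcs]
      linarith [h]
    have hsum := sum_tri_lb (0 : ℝ) _ htri
    rw [h0m, h1m, hcs] at hsum ⊢
    rw [h0a, h1a]
    linarith [hsum, Nat.cast_nonneg (α := ℝ) k]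

lemma Xs_const {k : ℕ} (s : Vk k → ℝ) (θ : ℝ) (hs : ∀ v, s v = θ) :
    Xs k s = θ * (3*(k:ℝ)+2) := by
  have h1 : cS k s = θ + θ := by rw [cS, hs, hs]
  have h2 : ∀ i : Fin k, tS k s i = θ+θ+θ := fun i => by rw [tS_eq, hs, hs, hs]
  rw [X_eq, h1, Finset.sum_congr rfl fun i _ => h2 i, Finset.sum_const, Finset.card_univ,
    Fintype.card_fin, nsmul_eq_mul]
  ring

lemma dlt_const {k : ℕ} (s : Vk k → ℝ) (θ : ℝ) (hs : ∀ v, s v = θ) :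
    dlt k θ s = θ * (12*(k:ℝ)+3) - (3*(k:ℝ)+2) := by
  have h1 : cS k s = θ + θ := by rw [cS, hs, hs]
  have h2 : ∀ i : Fin k, tS k s i = θ+θ+θ := fun i => by rw [tS_eq, hs, hs, hs]
  have hX := Xs_const s θ hs
  rw [dlt, Finset.sum_congr rfl fun v _ => if_pos (hs v),
    sumV (fun v => inc k s v - (1-θ)), inc_inl, inc_inl, hX, hs (.inl 0), hs (.inl 1)]
  have h3 : ∀ i : Fin k, (∑ j : Fin 3, (inc k s (.inr (i,j)) - (1-θ)))
      = 3*(2*θ - (1-θ)) := by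
    intro i
    rw [Fin.sum_univ_three, inc_inr, inc_inr, inc_inr, h1, h2 i, hs _, hs _, hs _]
    ring
  rw [Finset.sum_congr rfl fun i _ => h3 i, Finset.sum_const, Finset.card_univ,
    Fintype.card_fin, nsmul_eq_mul]
  ring

lemma R3b_false {k : ℕ} (hk : 1 ≤ k) (D : Scheme (Vk k)) (a b : ℝ) (ha0 : 0 ≤ a)
    (ha4 : a < 1/4) (hd : 1 - b < 2*a) (hab : a < b)
    (hsupp : ∀ s ∈ D.supp, ∀ v, s v = a ∨ s v = b)
    (hsa : 0 ≤ ∑ s ∈ D.supp, D.p s * dlt k a s)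
    (hsb : ∑ s ∈ D.supp, D.p s * dlt k b s = 0) : False := by
  have hk' : (1:ℝ) ≤ (k:ℝ) := by exact_mod_cast hk
  have hc0 : 0 < 2*a - (1-b) := by linarith
  -- pointwise lower bound on dlt b
  have stepA : ∀ s ∈ D.supp,
      (2*a - (1-b)) * (∑ v, if s v = b then (1:ℝ) else 0) ≤ dlt k b s := by
    intro s hsm
    have hval : ∀ u, a ≤ s u := by
      intro u
      rcases hsupp s hsm u with h | h
      · rw [h]
      · rw [h]; exact hab.le
    rw [dlt, Finset.mul_sum]
    apply Finset.sum_le_sum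
    intro v _
    by_cases hvb : s v = b
    · rw [if_pos hvb, if_pos hvb, mul_one]
      have hinc : 2*a ≤ inc k s v := by
        have h1 : a ≤ s (.inl 0) := hval _
        have h2 : a ≤ s (.inl 1) := hval _
        have hcseq : cS k s = s (.inl 0) + s (.inl 1) := rfl
        have htk : (k:ℝ)*(3*a) ≤ ∑ i, tS k s i := by
          apply sum_tri_lb
          intro i
          rw [tS_eq]
          linarith [hval (.inr (i,0)), hval (.inr (i,1)), hval (.inr (i,2))]
        have htk' : 3*a ≤ (k:ℝ)*(3*a) := by nlinarith
        cases v with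
        | inl c =>
          have hcase : s (Sum.inl c) = s (Sum.inl 0) ∨ s (Sum.inl c) = s (Sum.inl 1) := by
            fin_cases c
            · exact Or.inl rfl
            · exact Or.inr rfl
          rw [inc_inl, X_eq, hcseq]
          rcases hcase with h | h <;> rw [h] <;> linarith
        | inr p =>
          obtain ⟨i, j⟩ := p
          have h3 : a ≤ s (.inr (i,0)) := hval _
          have h4 : a ≤ s (.inr (i,1)) := hval _
          have h5 : a ≤ s (.inr (i,2)) := hval _
          have h6 := tS_eq s i
          have hcase : s (.inr (i,j)) = s (.inr (i,0)) ∨ s (.inr (i,j)) = s (.inr (i,1))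
              ∨ s (.inr (i,j)) = s (.inr (i,2)) := by
            fin_cases j
            · exact Or.inl rfl
            · exact Or.inr (Or.inl rfl)
            · exact Or.inr (Or.inr rfl)
          rw [inc_inr, h6, hcseq]
          rcases hcase with h | h | h <;> rw [h] <;> linarith
      linarith
    · rw [if_neg hvb, if_neg hvb, mul_zero]
  -- only all-`a` realizations have positive probability
  have hMb : ∀ s : Vk k → ℝ, 0 ≤ ∑ v, (if s v = b then (1:ℝ) else 0) := fun s =>
    Finset.sum_nonneg fun v _ => by positivity
  have hnn : ∀ s ∈ D.supp,
      0 ≤ D.p s * ((2*a - (1-b)) * ∑ v, (if s v = b then (1:ℝ) else 0)) :=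
    fun s hsm => mul_nonneg (D.p_nonneg s hsm) (mul_nonneg hc0.le (hMb s))
  have hB0 : ∑ s ∈ D.supp, D.p s * ((2*a - (1-b)) * ∑ v, (if s v = b then (1:ℝ) else 0)) = 0 :=
    le_antisymm
      (le_trans
        (Finset.sum_le_sum fun s hsm =>
          mul_le_mul_of_nonneg_left (stepA s hsm) (D.p_nonneg s hsm))
        (le_of_eq hsb))
      (Finset.sum_nonneg hnn)
  -- only all-`a` realizations have positive probability
  have hzero := (Finset.sum_eq_zero_iff_of_nonneg hnn).mp hB0
  have hconst : ∀ s ∈ D.supp, D.p s ≠ 0 → ∀ v, s v = a := by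
    intro s hsm hp v
    have h1 := hzero s hsm
    have h2 : ∑ u, (if s u = b then (1:ℝ) else 0) = 0 := by
      rcases mul_eq_zero.mp h1 with h | h
      · exact absurd h hp
      · rcases mul_eq_zero.mp h with h' | h'
        · exact absurd h' (ne_of_gt hc0)
        · exact h'
    have h3 := (Finset.sum_eq_zero_iff_of_nonneg
      (fun u _ => by positivity)).mp h2 v (Finset.mem_univ v)
    rcases hsupp s hsm v with h | h
    · exact h
    · rw [if_pos h] at h3; norm_num at h3
  -- contradiction with slack at a
  have hCneg : a * (12*(k:ℝ)+3) - (3*(k:ℝ)+2) < 0 := by nlinarith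
  have hle : ∑ s ∈ D.supp, D.p s * dlt k a s
      ≤ ∑ s ∈ D.supp, D.p s * (a * (12*(k:ℝ)+3) - (3*(k:ℝ)+2)) := by
    apply Finset.sum_le_sum
    intro s hsm
    rcases eq_or_ne (D.p s) 0 with h | h
    · rw [h, zero_mul, zero_mul]
    · rw [dlt_const s a (hconst s hsm h)]
  rw [← Finset.sum_mul, D.p_sum, one_mul] at hle
  linarith

lemma one_sig {k : ℕ} (hk : 1 ≤ k) (D : Scheme (Vk k)) (hP : D.Persuasive (Fk k)) (θ : ℝ)
    (hsig : D.sig = {θ}) : 1/12 * (3*(k:ℝ)+2) ≤ D.cost := by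
  have hθmem : θ ∈ D.sig := by rw [hsig]; exact Finset.mem_singleton_self θ
  have hθ := D.sig_mem θ hθmem
  have hsupp : ∀ s ∈ D.supp, ∀ v, s v = θ := fun s hs v =>
    Finset.mem_singleton.mp (hsig ▸ D.val_mem s hs v)
  have hk' : (1:ℝ) ≤ (k:ℝ) := by exact_mod_cast hk
  rcases eq_or_lt_of_le hθ.1 with h0 | hpos
  · exfalso
    have h0' : (0:ℝ) ∈ D.sig := by rw [← h0] at hθmem; exact hθmem
    have hs0 := hP.2 h0'
    rw [slack_eq] at hs0
    have heq : ∀ s ∈ D.supp, D.p s * dlt k 0 s = D.p s * (-(3*(k:ℝ)+2)) := by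
      intro s hsm
      rw [dlt_const s 0 (fun v => by rw [hsupp s hsm v, ← h0])]
      ring
    rw [Finset.sum_congr rfl heq, ← Finset.sum_mul, D.p_sum, one_mul] at hs0
    linarith
  · have hs := hP.1 θ hθmem hpos
    rw [slack_eq] at hs
    rw [Finset.sum_congr rfl (fun s hsm => by rw [dlt_const s θ (hsupp s hsm)]),
      ← Finset.sum_mul, D.p_sum, one_mul] at hs
    have hθ4 : 1/4 ≤ θ := by
      by_contra hcon
      push_neg at hcon
      have hpos' : (0:ℝ) < 12*(k:ℝ)+3 := by linarith
      have := mul_lt_mul_of_pos_right hcon hpos'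
      linarith
    have hcost : D.cost = θ * (3*(k:ℝ)+2) := by
      rw [cost_eq, Finset.sum_congr rfl (fun s hsm => by rw [Xs_const s θ (hsupp s hsm)]),
        ← Finset.sum_mul, D.p_sum, one_mul]
    rw [hcost]
    nlinarith

lemma two_sig {k : ℕ} (hk : 1 ≤ k) (D : Scheme (Vk k)) (hP : D.Persuasive (Fk k))
    (a b : ℝ) (hab : a < b) (hsig : D.sig = {a, b}) :
    1/12 * (3*(k:ℝ)+2) ≤ D.cost := by
  have hamem : a ∈ D.sig := by rw [hsig]; exact Finset.mem_insert_self a {b}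
  have hbmem : b ∈ D.sig := by
    rw [hsig]; exact Finset.mem_insert_of_mem (Finset.mem_singleton_self b)
  have ha := D.sig_mem a hamem
  have hb := D.sig_mem b hbmem
  have hb0 : 0 < b := lt_of_le_of_lt ha.1 hab
  have hk' : (1:ℝ) ≤ (k:ℝ) := by exact_mod_cast hk
  have hn0 : (0:ℝ) < 3*(k:ℝ)+2 := by linarith
  have hsupp : ∀ s ∈ D.supp, ∀ v, s v = a ∨ s v = b := by
    intro s hs v
    have h := D.val_mem s hs v
    rw [hsig, Finset.mem_insert, Finset.mem_singleton] at h
    exact h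
  have hsb : ∑ s ∈ D.supp, D.p s * dlt k b s = 0 := by
    rw [← slack_eq]; exact hP.1 b hbmem hb0
  have hsa : 0 ≤ ∑ s ∈ D.supp, D.p s * dlt k a s := by
    rcases eq_or_lt_of_le ha.1 with h0 | hpos
    · rw [← slack_eq, ← h0]
      exact hP.2 (by rw [← h0] at hamem; exact hamem)
    · rw [← slack_eq, hP.1 a hamem hpos]
  rcases le_or_gt (1/4 : ℝ) a with hR1 | ha4
  · have hXlb : ∀ s ∈ D.supp, (3*(k:ℝ)+2) * a ≤ Xs k s := by
      intro s hsm
      have hcard : ((Finset.univ : Finset (Vk k)).card : ℝ) = 3*(k:ℝ)+2 := by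
        simp [Finset.card_univ]
        push_cast
        ring
      calc (3*(k:ℝ)+2) * a = ∑ _v : Vk k, a := by
            rw [Finset.sum_const, nsmul_eq_mul, hcard]
        _ ≤ ∑ v, s v := Finset.sum_le_sum fun v _ => by
            rcases hsupp s hsm v with h | h
            · rw [h]
            · rw [h]; exact hab.le
        _ = Xs k s := rfl
    have hcb : (3*(k:ℝ)+2) * a ≤ D.cost := by
      rw [cost_eq]
      calc (3*(k:ℝ)+2)*a = ∑ s ∈ D.supp, D.p s * ((3*(k:ℝ)+2)*a) := by
            rw [← Finset.sum_mul, D.p_sum, one_mul]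
        _ ≤ ∑ s ∈ D.supp, D.p s * Xs k s := Finset.sum_le_sum fun s hsm =>
            mul_le_mul_of_nonneg_left (hXlb s hsm) (D.p_nonneg s hsm)
    have h4 := mul_le_mul_of_nonneg_left hR1 hn0.le
    linarith
  · rcases le_or_gt b (3/4) with hR2 | hb34
    · have h := cert D a b 1 1 3 (1/4) hsa hsb zero_le_one
        (fun s hsm => ptR2 s a b ha.1 hab.le hR2 (ne_of_lt hab) (hsupp s hsm))
      linarith
    · rcases le_or_gt (2*a) (1-b) with hR3a | hR3b
      · rcases lt_or_eq_of_le hb.2 with hblt | hbeq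
        · have h := cert D a b b (-2*b) (3*(1-b)) ((1-b)/2) hsa hsb hb0.le
            (fun s hsm =>
              ptR3a s a b ha.1 hR3a hb34.le hb.2 (ne_of_lt hab) (hsupp s hsm))
          have hb1' : (0:ℝ) < 1 - b := by linarith
          by_contra hcon
          push_neg at hcon
          have h2 := mul_lt_mul_of_pos_left hcon hb1'
          nlinarith [mul_pos hb1' hn0]
        · subst hbeq
          have ha' : a = 0 := le_antisymm (by linarith) ha.1
          subst ha'
          have h := cert D 0 1 1 (-(3*(k:ℝ)+4)) (3/2) (1/2) hsa hsb zero_le_one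
            (fun s hsm => ptR3c hk s (hsupp s hsm))
          linarith
      · exact (R3b_false hk D a b ha.1 ha4 hR3b hab hsupp hsa hsb).elim

lemma optir (k : ℕ) : OPTIR (Fk k) ≤ 2 := by
  have hbdd : BddBelow {c : ℝ | ∃ θ : Vk k → ℝ,
      Feasible (Fk k) θ ∧ (∀ v, θ v ≤ 1) ∧ c = ∑ v, θ v} := by
    refine ⟨0, fun c hc => ?_⟩
    obtain ⟨θ, hf, _, rfl⟩ := hc
    exact Finset.sum_nonneg fun v _ => hf.1 v
  apply csInf_le hbdd
  refine ⟨Sum.elim (fun _ => (1:ℝ)) (fun _ => 0), ⟨fun v => ?_, fun v => ?_⟩, fun v => ?_, ?_⟩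
  · cases v <;> simp
  · rw [sumV (fun u => Fk k v u * Sum.elim (fun _ => (1:ℝ)) (fun _ => 0) u)]
    have hz : ∀ i : Fin k, (∑ j : Fin 3,
        Fk k v (.inr (i,j)) * Sum.elim (fun _ => (1:ℝ)) (fun _ => 0) (Sum.inr (i,j) : Vk k)) = 0 := by
      intro i; simp
    rw [Finset.sum_congr rfl fun i _ => hz i, Finset.sum_const, smul_zero, add_zero]
    cases v with
    | inl c => fin_cases c <;> norm_num [Fk]
    | inr p =>
      show (1:ℝ) ≤ 1/2 * 1 + 1/2 * 1
      norm_num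
  · cases v <;> simp
  · rw [sumV (Sum.elim (fun _ => (1:ℝ)) (fun _ => 0))]
    norm_num

end S5
/-- There exist `c > 0` and `k₀` such that for every `k ≥ k₀`, on the
graph `F_k` (with `n = 3k + 2` vertices and `OPT^IR ≤ 2`) every persuasive *binary*
identity-independent signaling scheme has cost at least `c·n`. -/
theorem statement5 :
    ∃ (c : ℝ) (k₀ : ℕ), 0 < c ∧
      ∀ k : ℕ, k₀ ≤ k →
        OPTIR (Fk k) ≤ 2 ∧
        ∀ D : Scheme (Fin 2 ⊕ Fin k × Fin 3),
          D.sig.card ≤ 2 → D.Persuasive (Fk k) →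
          c * ((3 * k + 2 : ℕ) : ℝ) ≤ D.cost := by
  refine ⟨1/12, 1, by norm_num, fun k hk => ⟨S5.optir k, fun D hcard hP => ?_⟩⟩
  have hmain : 1/12 * (3*(k:ℝ)+2) ≤ D.cost := by
    have hne : D.supp.Nonempty := by
      rcases Finset.eq_empty_or_nonempty D.supp with h | h
      · have hps := D.p_sum
        rw [h, Finset.sum_empty] at hps
        norm_num at hps
      · exact h
    obtain ⟨s₀, hs₀⟩ := hne
    have hsi : D.sig.Nonempty := ⟨s₀ (Sum.inl 0), D.val_mem s₀ hs₀ (Sum.inl 0)⟩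
    have h1or2 : D.sig.card = 1 ∨ D.sig.card = 2 := by
      have h := Finset.card_pos.mpr hsi
      omega
    rcases h1or2 with h1 | h2
    · obtain ⟨θ, hθ⟩ := Finset.card_eq_one.mp h1
      exact S5.one_sig hk D hP θ hθ
    · obtain ⟨x, y, hxy, hsxy⟩ := Finset.card_eq_two.mp h2
      rcases lt_or_gt_of_ne hxy with h | h
      · exact S5.two_sig hk D hP x y h hsxy
      · exact S5.two_sig hk D hP y x h (by rw [hsxy, Finset.pair_comm])
  have hcast : ((3*k+2 : ℕ) : ℝ) = 3*(k:ℝ)+2 := by push_cast; ring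
  rw [hcast]
  exact hmain
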